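/- arXiv:1407.3589 — 4 statements merged into one kernel-verified Lean document; each statement's English description precedes it below -/
import Mathlib

section
/- Let K be a sextic field (degree 6 over Q) containing no quadratic subfield, and let K₁ be a field of degree at most 2 over Q. Then there is no injective Q-algebra homomorphism from K into the matrix algebra M₃(K₁). -/
/-!
Let `β` generate `K` over `ℚ`. The image `f K = ℚ[f β]` lies in the `K₁`-algebra `K₁[f β]`,
which by Cayley–Hamilton has `K₁`-dimension at most `3`, hence `ℚ`-dimension at most
`3 [K₁ : ℚ] ≤ 6 = [K : ℚ]`. So both inequalities are equalities: `[K₁ : ℚ] = 2` and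
`f K = K₁[f β]` contains the scalar matrices, which makes `K₁` a quadratic subfield of `K`.
-/

open Module IntermediateField

theorem Algebra.finrank_adjoin_singleton_le_natDegree {E A : Type*} [Field E] [Ring A]
    [Algebra E A] {x : A} {p : Polynomial E} (hp : p.Monic) (hpx : Polynomial.aeval x p = 0) :
    finrank E (Algebra.adjoin E {x}) ≤ p.natDegree := by
  classical
  rw [← Subalgebra.finrank_toSubmodule, ← Submodule.span_range_natDegree_eq_adjoin hp hpx]
  exact (finrank_span_finset_le_card _).trans (Finset.card_image_le.trans (Finset.card_range _).le)

theorem Matrix.finrank_adjoin_singleton_le {n E : Type*} [Fintype n] [DecidableEq n] [Field E]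
    (x : Matrix n n E) : finrank E (Algebra.adjoin E {x}) ≤ Fintype.card n :=
  x.charpoly_natDegree_eq_dim ▸
    Algebra.finrank_adjoin_singleton_le_natDegree x.charpoly_monic x.aeval_self_charpoly

section
variable {F E A : Type*} [Field F] [Field E] [Ring A] [Algebra F E] [Algebra E A] [Algebra F A]
  [IsScalarTower F E A]

theorem AlgHom.range_le_restrictScalars_adjoin {K : Type*} [Field K] [Algebra F K]
    (f : K →ₐ[F] A) {β : K} (hβ : F⟮β⟯ = ⊤) (hβalg : IsAlgebraic F β) :
    f.range ≤ (Algebra.adjoin E {f β}).restrictScalars F := by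
  have : Algebra.adjoin F {β} = ⊤ := by
    rw [← adjoin_simple_toSubalgebra_of_isAlgebraic hβalg, hβ, top_toSubalgebra]
  rw [← Algebra.map_top, ← this, AlgHom.map_adjoin_singleton]
  exact Algebra.adjoin_le (Set.singleton_subset_iff.mpr (Algebra.self_mem_adjoin_singleton E _))

theorem Subalgebra.algebraMap_mem_of_le_restrictScalars_of_finrank_le (S : Subalgebra F A)
    (T : Subalgebra E A) [FiniteDimensional F T] (hle : S ≤ T.restrictScalars F)
    (hrank : finrank F T ≤ finrank F S) (c : E) : algebraMap E A c ∈ S := by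
  have : FiniteDimensional F (Subalgebra.toSubmodule (T.restrictScalars F)) := ‹_›
  have : Subalgebra.toSubmodule S = Subalgebra.toSubmodule (T.restrictScalars F) :=
    Submodule.eq_of_le_of_finrank_le hle hrank
  exact (SetLike.ext_iff.mp this _).mpr (T.algebraMap_mem c)

theorem AlgHom.nonempty_algHom_of_algebraMap_mem_range {K : Type*} [Field K] [Algebra F K]
    (f : K →ₐ[F] A) (hf : Function.Injective f) (h : ∀ c : E, algebraMap E A c ∈ f.range) :
    Nonempty (E →ₐ[F] K) :=
  ⟨(AlgEquiv.ofInjective f hf).symm.toAlgHom.comp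
    ((IsScalarTower.toAlgHom F E A).codRestrict f.range h)⟩
end

/-- Let `K` be a sextic field (degree 6 over `ℚ`) containing no quadratic subfield, and let
`K₁` be a field of degree at most 2 over `ℚ`. Then there is no injective `ℚ`-algebra
homomorphism from `K` into the matrix algebra `M₃(K₁)`. -/
theorem no_embedding_sextic_into_matrix (K K₁ : Type*) [Field K] [Algebra ℚ K]
    [Field K₁] [Algebra ℚ K₁] [FiniteDimensional ℚ K₁]
    (h6 : Module.finrank ℚ K = 6)
    (hnosub : ∀ L : IntermediateField ℚ K, Module.finrank ℚ L ≠ 2)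
    (h2 : Module.finrank ℚ K₁ ≤ 2) :
    ¬∃ f : K →ₐ[ℚ] Matrix (Fin 3) (Fin 3) K₁, Function.Injective f := by
  rintro ⟨f, hf⟩
  have : FiniteDimensional ℚ K := Module.finite_of_finrank_eq_succ h6
  obtain ⟨β, hβ⟩ := Field.exists_primitive_element ℚ K
  set T := Algebra.adjoin K₁ {f β}
  have : FiniteDimensional ℚ T := Module.Finite.trans K₁ T
  have hle : f.range ≤ T.restrictScalars ℚ :=
    f.range_le_restrictScalars_adjoin hβ (IsIntegral.of_finite ℚ β).isAlgebraic
  have hrange : finrank ℚ f.range = 6 :=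
    (AlgEquiv.ofInjective f hf).toLinearEquiv.finrank_eq.symm.trans h6
  have hT : finrank K₁ T ≤ 3 := by simpa using (f β).finrank_adjoin_singleton_le
  have hTQ : finrank ℚ T = finrank ℚ K₁ * finrank K₁ T := (finrank_mul_finrank ℚ K₁ T).symm
  have h6T : 6 ≤ finrank ℚ T :=
    hrange ▸ Submodule.finrank_mono (Subalgebra.toSubmodule.monotone hle)
  have hK₁ : finrank ℚ K₁ = 2 := by
    have : 0 < finrank ℚ K₁ := finrank_pos
    interval_cases finrank ℚ K₁ <;> omega
  obtain ⟨g⟩ := f.nonempty_algHom_of_algebraMap_mem_range hf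
    (f.range.algebraMap_mem_of_le_restrictScalars_of_finrank_le T hle
      (by rw [hrange, hTQ, hK₁]; omega))
  exact hnosub g.fieldRange ((AlgEquiv.ofInjectiveField g).toLinearEquiv.finrank_eq.symm.trans hK₁)
end

section
/- Let R be a maximal order in the quaternion algebra B_{p,∞} over Q ramified exactly at p and ∞. If k₁, k₂ ∈ R have reduced norms Nrd(k₁), Nrd(k₂) < √p / 2, then k₁ k₂ = k₂ k₁. -/
/-!
Ramification at `∞` makes `B = (c₁, c₂ / ℚ)` definite (`c₁, c₂ < 0`). If `k₁` and `k₂` do not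
commute, their commutator `δ` is a nonzero element of `R`, so `0 < Nrd δ ≤ 4 Nrd k₁ Nrd k₂ < p`;
as these norms are integers, `p > 4` and `p ∤ Nrd δ`.
The discriminant `D z = Trd(z)² - 4 Nrd z` restricted to the lattice `ℤ k₁ + ℤ k₂` is an integral
binary quadratic form of discriminant `-16 Nrd δ`, hence nondegenerate mod `p`, so it takes a value
`≡ 1 (mod p)` at some `z = u k₁ + v k₂`. By Hensel's lemma `D z` is a square in `ℚ_p`, so the
reduced characteristic polynomial of `z` splits over `ℚ_p`; as `B ⊗ ℚ_p` is a division algebra,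
`z` is a scalar, and then `k₁` and `k₂` commute.
-/

open scoped Quaternion

/-- An order in a quaternion algebra `B` over `ℚ`: a subring all of whose elements are
integral over `ℤ` and which spans `B` over `ℚ`. -/
def IsQuaternionOrder {c₁ c₂ : ℚ} (R : Subring ℍ[ℚ,c₁,c₂]) : Prop :=
  (∀ x ∈ R, IsIntegral ℤ x) ∧ Submodule.span ℚ (R : Set ℍ[ℚ,c₁,c₂]) = ⊤

open Polynomial

theorem commute_of_smul_add_smul_mem_range {K A : Type*} [Field K] [Ring A] [Algebra K A]
    {x y : A} {a b : K} (hab : a ≠ 0 ∨ b ≠ 0) (h : a • x + b • y ∈ (algebraMap K A).range) :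
    Commute x y := by
  obtain ⟨r, hr⟩ := h
  have hcentral (w : A) : Commute (a • x + b • y) w := hr ▸ Algebra.commute_algebraMap_left r w
  rcases hab with ha | hb
  · have := (hcentral y).sub_left ((Commute.refl y).smul_left b)
    rwa [add_sub_cancel_right, Commute.smul_left_iff₀ ha] at this
  · have := (hcentral x).symm.sub_right ((Commute.refl x).smul_right a)
    rwa [add_sub_cancel_left, Commute.smul_right_iff₀ hb] at this

theorem four_mul_mul_lt_of_lt_sqrt_div_two {x y q : ℝ} (hx : 0 ≤ x) (hxq : x < √q / 2)
    (hyq : y < √q / 2) : 4 * (x * y) < q := by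
  have hq : 0 < q := Real.sqrt_pos.1 (by linarith)
  nlinarith [Real.sq_sqrt hq.le]

theorem PadicInt.isSquare_of_norm_sub_one_lt_one {p : ℕ} [Fact p.Prime] (hp : p ≠ 2)
    {x : ℤ_[p]} (hx : ‖x - 1‖ < 1) : IsSquare x := by
  have h2 : ‖(2 : ℤ_[p])‖ = 1 := by
    simpa using (norm_natCast_eq_one_iff (p := p) (n := 2)).2
      ((Nat.coprime_primes Fact.out Nat.prime_two).2 hp)
  obtain ⟨z, hz, -⟩ := hensels_lemma (p := p) (F := X ^ 2 - C x) (a := 1)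
    (by simpa [one_add_one_eq_two, h2, norm_sub_rev] using hx)
  exact ⟨z, by simpa [sq, sub_eq_zero, eq_comm] using hz⟩

theorem Padic.isSquare_intCast_of_modEq_one {p : ℕ} [Fact p.Prime] (hp : p ≠ 2) {N : ℤ}
    (hN : N ≡ 1 [ZMOD p]) : IsSquare (N : ℚ_[p]) := by
  obtain ⟨z, hz⟩ := PadicInt.isSquare_of_norm_sub_one_lt_one hp (x := N) (by
    simpa using (PadicInt.norm_int_lt_one_iff_dvd (N - 1)).2 hN.symm.dvd)
  exact ⟨z, by simpa using congrArg ((↑) : ℤ_[p] → ℚ_[p]) hz⟩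

theorem FiniteField.exists_binary_quadratic_eq_one {F : Type*} [Field F] [Fintype F]
    (hF : ringChar F ≠ 2) {a b c : F} (h : b ^ 2 - a * c ≠ 0) :
    ∃ u v : F, a * u ^ 2 + 2 * b * u * v + c * v ^ 2 = 1 := by
  have h2 : (2 : F) ≠ 0 := Ring.two_ne_zero hF
  by_cases ha : a = 0
  · have hb : b ≠ 0 := by rintro rfl; simp [ha] at h
    exact ⟨(1 - c) / (2 * b), 1, by rw [ha]; field_simp; ring⟩
  have hd : c - b ^ 2 / a ≠ 0 := by
    contrapose! h
    field_simp at h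
    linear_combination -h
  obtain ⟨s, t, hst⟩ := exists_root_sum_quadratic (f := C a * X ^ 2)
    (g := C (c - b ^ 2 / a) * X ^ 2 - 1) (by compute_degree!) (by compute_degree!)
    (odd_card_of_char_ne_two hF)
  simp only [eval_mul, eval_pow, eval_X, eval_C, eval_sub, eval_one] at hst
  have hcomplete : a * (s - b * t / a) ^ 2 + 2 * b * (s - b * t / a) * t + c * t ^ 2 =
      a * s ^ 2 + (c - b ^ 2 / a) * t ^ 2 := by
    field_simp
    ring
  exact ⟨s - b * t / a, t, by linear_combination hcomplete + hst⟩

theorem Int.exists_binary_quadratic_modEq_one {p : ℕ} [Fact p.Prime] (hp : p ≠ 2) {a b c : ℤ}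
    (h : ¬(p : ℤ) ∣ b ^ 2 - a * c) :
    ∃ u v : ℤ, a * u ^ 2 + 2 * b * u * v + c * v ^ 2 ≡ 1 [ZMOD p] := by
  have h' : (b : ZMod p) ^ 2 - a * c ≠ 0 := by
    simpa using mt (ZMod.intCast_zmod_eq_zero_iff_dvd _ p).1 h
  obtain ⟨u, v, huv⟩ :=
    FiniteField.exists_binary_quadratic_eq_one (by rwa [ZMod.ringChar_zmod_n]) h'
  obtain ⟨u, rfl⟩ := ZMod.intCast_surjective u
  obtain ⟨v, rfl⟩ := ZMod.intCast_surjective v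
  exact ⟨u, v, (ZMod.intCast_eq_intCast_iff _ _ p).1 (by push_cast; exact huv)⟩

namespace QuaternionAlgebra

section CommRing

variable {R : Type*} [CommRing R] {c₁ c₂ : R}

def trd (x : ℍ[R,c₁,c₂]) : R := 2 * x.re

def nrd (x : ℍ[R,c₁,c₂]) : R :=
  x.re ^ 2 - c₁ * x.imI ^ 2 - c₂ * x.imJ ^ 2 + c₁ * c₂ * x.imK ^ 2

def disc (x : ℍ[R,c₁,c₂]) : R := x.trd ^ 2 - 4 * x.nrd

/-- The symmetric bilinear form associated with the quadratic form `disc`. -/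
def discBilin (x y : ℍ[R,c₁,c₂]) : R := 2 * (x * y).trd - x.trd * y.trd

noncomputable def reducedCharpoly (x : ℍ[R,c₁,c₂]) : R[X] := X ^ 2 - C x.trd * X + C x.nrd

theorem mul_star_eq_algebraMap_nrd (x : ℍ[R,c₁,c₂]) : x * star x = algebraMap R _ x.nrd := by
  ext <;> simp [nrd, algebraMap_eq] <;> ring

theorem aeval_reducedCharpoly (x : ℍ[R,c₁,c₂]) : aeval x x.reducedCharpoly = 0 := by
  ext <;> simp [reducedCharpoly, sq, trd, nrd, algebraMap_eq] <;> ring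

theorem four_mul_nrd_commutator (x y : ℍ[R,c₁,c₂]) :
    4 * (x * y - y * x).nrd = x.disc * y.disc - discBilin x y ^ 2 := by
  simp only [nrd, disc, discBilin, trd, re_mul, imI_mul, imJ_mul, imK_mul, re_sub, imI_sub,
    imJ_sub, imK_sub]
  ring

theorem disc_smul_add_smul (x y : ℍ[R,c₁,c₂]) (a b : R) :
    (a • x + b • y).disc = x.disc * a ^ 2 + 2 * discBilin x y * a * b + y.disc * b ^ 2 := by
  simp only [nrd, disc, discBilin, trd, re_mul, re_add, imI_add, imJ_add, imK_add, re_smul,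
    imI_smul, imJ_smul, imK_smul, smul_eq_mul]
  ring

theorem eq_zero_of_nrd_eq_zero (hdiv : ∀ x : ℍ[R,c₁,c₂], x ≠ 0 → IsUnit x) {x : ℍ[R,c₁,c₂]}
    (hx : x.nrd = 0) : x = 0 := by
  by_contra h
  have : star x = 0 :=
    (hdiv x h).mul_right_eq_zero.1 (by simp [mul_star_eq_algebraMap_nrd, hx])
  exact h (star_eq_zero.1 this)

theorem not_isSquare_c₁ [Nontrivial R] (hdiv : ∀ x : ℍ[R,c₁,c₂], x ≠ 0 → IsUnit x) :
    ¬IsSquare c₁ := by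
  rintro ⟨s, hs⟩
  have h := eq_zero_of_nrd_eq_zero hdiv (x := ⟨s, 1, 0, 0⟩) (by simp [nrd, hs, sq])
  simpa using congrArg imI h

theorem not_isSquare_c₂ [Nontrivial R] (hdiv : ∀ x : ℍ[R,c₁,c₂], x ≠ 0 → IsUnit x) :
    ¬IsSquare c₂ := by
  rintro ⟨s, hs⟩
  have h := eq_zero_of_nrd_eq_zero hdiv (x := ⟨s, 0, 1, 0⟩) (by simp [nrd, hs, sq])
  simpa using congrArg imJ h

end CommRing

section Definite

variable {K : Type*} [Field K] [LinearOrder K] [IsStrictOrderedRing K] {c₁ c₂ : K}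
  (hc₁ : c₁ < 0) (hc₂ : c₂ < 0)
include hc₁ hc₂

theorem nrd_nonneg (x : ℍ[K,c₁,c₂]) : 0 ≤ x.nrd := by
  have := mul_pos_of_neg_of_neg hc₁ hc₂
  rw [nrd]
  nlinarith [sq_nonneg x.re, sq_nonneg x.imI, sq_nonneg x.imJ, sq_nonneg x.imK]

theorem nrd_pos {x : ℍ[K,c₁,c₂]} (hx : x ≠ 0) : 0 < x.nrd := by
  refine (nrd_nonneg hc₁ hc₂ x).lt_of_ne' fun h => hx ?_
  have := mul_pos_of_neg_of_neg hc₁ hc₂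
  rw [nrd] at h
  ext <;> refine (pow_eq_zero_iff two_ne_zero).1 ?_ <;>
    nlinarith [sq_nonneg x.re, sq_nonneg x.imI, sq_nonneg x.imJ, sq_nonneg x.imK]

theorem disc_nonpos (x : ℍ[K,c₁,c₂]) : x.disc ≤ 0 := by
  have := mul_pos_of_neg_of_neg hc₁ hc₂
  have hdisc : x.disc = 4 * (c₁ * x.imI ^ 2 + c₂ * x.imJ ^ 2 - c₁ * c₂ * x.imK ^ 2) := by
    simp only [disc, trd, nrd]
    ring
  rw [hdisc]
  nlinarith [sq_nonneg x.imI, sq_nonneg x.imJ, sq_nonneg x.imK]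

theorem nrd_commutator_le (x y : ℍ[K,c₁,c₂]) : (x * y - y * x).nrd ≤ 4 * (x.nrd * y.nrd) := by
  have hx : -x.disc ≤ 4 * x.nrd := by rw [disc]; linarith [sq_nonneg x.trd]
  have hy : -y.disc ≤ 4 * y.nrd := by rw [disc]; linarith [sq_nonneg y.trd]
  have hdisc : x.disc * y.disc ≤ 4 * x.nrd * (4 * y.nrd) := by
    rw [← neg_mul_neg]
    have := disc_nonpos hc₁ hc₂ x
    exact mul_le_mul hx hy (neg_nonneg.2 (disc_nonpos hc₁ hc₂ y)) (by linarith)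
  linarith [four_mul_nrd_commutator x y, sq_nonneg (discBilin x y)]

end Definite

section Field

variable {K : Type*} [Field K] {c₁ c₂ : K}

theorem minpoly_eq_reducedCharpoly {x : ℍ[K,c₁,c₂]}
    (hx : x ∉ (algebraMap K ℍ[K,c₁,c₂]).range) : minpoly K x = x.reducedCharpoly := by
  have hmonic : x.reducedCharpoly.Monic := by
    rw [reducedCharpoly]
    monicity!
  have hdeg : x.reducedCharpoly.natDegree = 2 := by
    rw [reducedCharpoly]
    compute_degree!
  have hint : IsIntegral K x := ⟨_, hmonic, aeval_reducedCharpoly x⟩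
  exact (eq_of_monic_of_dvd_of_natDegree_le (minpoly.monic hint) hmonic
    (minpoly.dvd K x (aeval_reducedCharpoly x))
    (hdeg.trans_le ((minpoly.two_le_natDegree_iff hint).2 hx))).symm

theorem mem_range_algebraMap_of_isSquare_disc [NeZero (2 : K)]
    (hdiv : ∀ x : ℍ[K,c₁,c₂], x ≠ 0 → IsUnit x) {z : ℍ[K,c₁,c₂]} (hz : IsSquare z.disc) :
    z ∈ (algebraMap K ℍ[K,c₁,c₂]).range := by
  obtain ⟨σ, hσ⟩ := hz
  set α := (z.trd + σ) / 2
  set β := (z.trd - σ) / 2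
  have hsplit : z.reducedCharpoly = (X - C α) * (X - C β) := by
    have hsum : z.trd = α + β := by
      simp only [α, β]
      field_simp
      ring
    have hprod : z.nrd = α * β := by
      simp only [α, β]
      rw [disc] at hσ
      field_simp
      linear_combination -hσ
    rw [reducedCharpoly, hsum, hprod, map_add, map_mul]
    ring
  have hfactor : (z - algebraMap K _ α) * (z - algebraMap K _ β) = 0 := by
    simpa [hsplit] using aeval_reducedCharpoly z
  by_cases h : z - algebraMap K _ α = 0
  · exact ⟨α, (sub_eq_zero.1 h).symm⟩
  · exact ⟨β, (sub_eq_zero.1 ((hdiv _ h).mul_right_eq_zero.1 hfactor)).symm⟩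

theorem mem_range_algebraMap_of_isSquare_map_disc {L : Type*} [Field L] [NeZero (2 : L)]
    (f : K →+* L) (hdiv : ∀ x : ℍ[L, f c₁, f c₂], x ≠ 0 → IsUnit x) {z : ℍ[K,c₁,c₂]}
    (hz : IsSquare (f z.disc)) : z ∈ (algebraMap K ℍ[K,c₁,c₂]).range := by
  set z' : ℍ[L, f c₁, f c₂] := ⟨f z.re, f z.imI, f z.imJ, f z.imK⟩
  have hdisc : z'.disc = f z.disc := by simp [z', disc, trd, nrd, map_ofNat]
  obtain ⟨r, hr⟩ := mem_range_algebraMap_of_isSquare_disc hdiv (hdisc ▸ hz)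
  obtain ⟨-, hI, hJ, hK⟩ : r = f z.re ∧ 0 = f z.imI ∧ 0 = f z.imJ ∧ 0 = f z.imK := by
    simpa [z', algebraMap_eq, QuaternionAlgebra.ext_iff] using hr
  refine ⟨z.re, ?_⟩
  ext <;> simp [algebraMap_eq, (map_eq_zero f).1 hI.symm, (map_eq_zero f).1 hJ.symm,
    (map_eq_zero f).1 hK.symm]

end Field

theorem exists_int_eq_trd_and_nrd {c₁ c₂ : ℚ} {x : ℍ[ℚ,c₁,c₂]} (hx : IsIntegral ℤ x) :
    ∃ t n : ℤ, x.trd = t ∧ x.nrd = n := by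
  by_cases hr : x ∈ (algebraMap ℚ ℍ[ℚ,c₁,c₂]).range
  · obtain ⟨r, rfl⟩ := hr
    obtain ⟨k, rfl⟩ := IsIntegrallyClosed.isIntegral_iff.1
      ((isIntegral_algebraMap_iff algebraMap_injective).1 hx)
    exact ⟨2 * k, k ^ 2, by simp [trd], by simp [nrd]⟩
  -- Gauss's lemma: a monic factor over `ℚ` of a monic integer polynomial is integral.
  obtain ⟨P, hP, hPx⟩ := id hx
  obtain ⟨g, hg⟩ := IsIntegrallyClosed.eq_map_mul_C_of_dvd ℚ hP
    (minpoly.dvd ℚ x (by rwa [aeval_map_algebraMap]) : minpoly ℚ x ∣ P.map (algebraMap ℤ ℚ))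
  rw [(minpoly.monic hx.tower_top).leadingCoeff, C_1, mul_one,
    minpoly_eq_reducedCharpoly hr] at hg
  refine ⟨-g.coeff 1, g.coeff 0, ?_, ?_⟩
  · have := congrArg (coeff · 1) hg
    simp [reducedCharpoly] at this
    push_cast
    linarith
  · simpa [reducedCharpoly] using (congrArg (coeff · 0) hg).symm

theorem commute_of_not_dvd_nrd_commutator {p : ℕ} [Fact p.Prime] (hp : p ≠ 2) {c₁ c₂ : ℚ}
    (hramp : ∀ x : ℍ[ℚ_[p], (c₁ : ℚ_[p]), (c₂ : ℚ_[p])], x ≠ 0 → IsUnit x)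
    {R : Subring ℍ[ℚ,c₁,c₂]} (hR : ∀ x ∈ R, IsIntegral ℤ x) {x y : ℍ[ℚ,c₁,c₂]}
    (hx : x ∈ R) (hy : y ∈ R) {m : ℤ} (hm : (x * y - y * x).nrd = m) (hpm : ¬(p : ℤ) ∣ m) :
    Commute x y := by
  obtain ⟨t₁, n₁, ht₁, hn₁⟩ := exists_int_eq_trd_and_nrd (hR x hx)
  obtain ⟨t₂, n₂, ht₂, hn₂⟩ := exists_int_eq_trd_and_nrd (hR y hy)
  obtain ⟨e, -, he, -⟩ := exists_int_eq_trd_and_nrd (hR _ (mul_mem hx hy))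
  set D₁ := t₁ ^ 2 - 4 * n₁
  set D₂ := t₂ ^ 2 - 4 * n₂
  set E := 2 * e - t₁ * t₂
  have hD₁ : x.disc = D₁ := by simp [D₁, disc, ht₁, hn₁]
  have hD₂ : y.disc = D₂ := by simp [D₂, disc, ht₂, hn₂]
  have hE : discBilin x y = E := by simp [E, discBilin, he, ht₁, ht₂]
  have hkey : E ^ 2 - D₁ * D₂ = -4 * m := by
    have := four_mul_nrd_commutator x y
    rw [hD₁, hD₂, hE, hm] at this
    exact_mod_cast (by push_cast; linarith : ((E ^ 2 - D₁ * D₂ : ℤ) : ℚ) = ((-4 * m : ℤ) : ℚ))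
  have hpE : ¬(p : ℤ) ∣ E ^ 2 - D₁ * D₂ := by
    have hp' : p.Prime := Fact.out
    rw [hkey, (Nat.prime_iff_prime_int.1 hp').dvd_mul, not_or]
    refine ⟨fun h4 => hp ?_, hpm⟩
    have h4' : p ∣ 2 ^ 2 := by exact_mod_cast dvd_neg.1 h4
    exact (Nat.prime_dvd_prime_iff_eq hp' Nat.prime_two).1 (hp'.dvd_of_dvd_pow h4')
  obtain ⟨u, v, huv⟩ := Int.exists_binary_quadratic_modEq_one hp hpE
  have hz : (u : ℚ) • x + (v : ℚ) • y ∈ (algebraMap ℚ ℍ[ℚ,c₁,c₂]).range := by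
    refine mem_range_algebraMap_of_isSquare_map_disc (Rat.castHom ℚ_[p]) hramp ?_
    rw [disc_smul_add_smul, hD₁, hD₂, hE]
    simpa using Padic.isSquare_intCast_of_modEq_one hp huv
  refine commute_of_smul_add_smul_mem_range ?_ hz
  by_contra! h
  obtain ⟨rfl, rfl⟩ : u = 0 ∧ v = 0 := by exact_mod_cast h
  have h1 : (p : ℤ) ∣ 1 := by simpa using huv.dvd
  exact (Fact.out : p.Prime).one_lt.ne' (by exact_mod_cast Int.eq_one_of_dvd_one (by positivity) h1)

end QuaternionAlgebra

theorem small_norm_elements_commute_general (p : ℕ) [hp : Fact p.Prime] (c₁ c₂ : ℚ)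
    (hinf : ∀ x : ℍ[ℝ, (c₁ : ℝ), (c₂ : ℝ)], x ≠ 0 → IsUnit x)
    (hramp : ∀ x : ℍ[ℚ_[p], (c₁ : ℚ_[p]), (c₂ : ℚ_[p])], x ≠ 0 → IsUnit x)
    (R : Subring ℍ[ℚ,c₁,c₂]) (hR : IsQuaternionOrder R)
    (k₁ k₂ : ℍ[ℚ,c₁,c₂]) (hk₁ : k₁ ∈ R) (hk₂ : k₂ ∈ R)
    (n₁ n₂ : ℚ) (hn₁ : k₁ * star k₁ = algebraMap ℚ _ n₁)
    (hn₂ : k₂ * star k₂ = algebraMap ℚ _ n₂)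
    (hb₁ : (n₁ : ℝ) < Real.sqrt p / 2) (hb₂ : (n₂ : ℝ) < Real.sqrt p / 2) :
    k₁ * k₂ = k₂ * k₁ := by
  have hc₁ : c₁ < 0 := by simpa using QuaternionAlgebra.not_isSquare_c₁ hinf
  have hc₂ : c₂ < 0 := by simpa using QuaternionAlgebra.not_isSquare_c₂ hinf
  have hnrd (x : ℍ[ℚ,c₁,c₂]) (hx : x ∈ R) : ∃ n : ℤ, x.nrd = n := by
    obtain ⟨-, n, -, h⟩ := QuaternionAlgebra.exists_int_eq_trd_and_nrd (hR.1 x hx)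
    exact ⟨n, h⟩
  obtain ⟨b, hb⟩ := hnrd k₁ hk₁
  obtain ⟨d, hd⟩ := hnrd k₂ hk₂
  obtain ⟨m, hm⟩ := hnrd _ (sub_mem (mul_mem hk₁ hk₂) (mul_mem hk₂ hk₁))
  obtain rfl : n₁ = b := QuaternionAlgebra.algebraMap_injective
    (hn₁.symm.trans (QuaternionAlgebra.mul_star_eq_algebraMap_nrd k₁)) |>.trans hb
  obtain rfl : n₂ = d := QuaternionAlgebra.algebraMap_injective
    (hn₂.symm.trans (QuaternionAlgebra.mul_star_eq_algebraMap_nrd k₂)) |>.trans hd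
  have hbd : 4 * (b * d) < p := by
    have hb₀ : (0 : ℝ) ≤ (b : ℚ) := by
      exact_mod_cast hb ▸ QuaternionAlgebra.nrd_nonneg hc₁ hc₂ k₁
    exact_mod_cast four_mul_mul_lt_of_lt_sqrt_div_two hb₀ hb₁ hb₂
  by_contra hne
  have hm_pos : 0 < m := by
    exact_mod_cast hm ▸ QuaternionAlgebra.nrd_pos hc₁ hc₂ (sub_ne_zero.2 hne)
  have hm_le : m ≤ 4 * (b * d) := by
    exact_mod_cast hm ▸ hb ▸ hd ▸ QuaternionAlgebra.nrd_commutator_le hc₁ hc₂ k₁ k₂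
  -- `1 ≤ m ≤ 4 b d` forces `b d ≥ 1`, so `p > 4`.
  have hp2 : p ≠ 2 := by
    rintro rfl
    omega
  refine hne (QuaternionAlgebra.commute_of_not_dvd_nrd_commutator hp2 hramp hR.1 hk₁ hk₂ hm ?_)
  exact fun h => (Int.le_of_dvd hm_pos h).not_gt (hm_le.trans_lt hbd)

/-- (Goren–Lauter: elements of small norm commute.) Let `B = (c₁, c₂ / ℚ)` be a quaternion
algebra over `ℚ` which is ramified exactly at a prime `p` and at `∞` (i.e. `B ⊗ ℚ_p` and
`B ⊗ ℝ` are division algebras, while `B ⊗ ℚ_ℓ` is not a division algebra for every prime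
`ℓ ≠ p`), and let `R` be a maximal order of `B`. If `k₁, k₂ ∈ R` have reduced norms
`Nrd(kᵢ) = kᵢ · k̄ᵢ < √p / 2`, then `k₁ k₂ = k₂ k₁`. -/
theorem small_norm_elements_commute (p : ℕ) [hp : Fact p.Prime] (c₁ c₂ : ℚ)
    (hinf : ∀ x : ℍ[ℝ, (c₁ : ℝ), (c₂ : ℝ)], x ≠ 0 → IsUnit x)
    (hramp : ∀ x : ℍ[ℚ_[p], (c₁ : ℚ_[p]), (c₂ : ℚ_[p])], x ≠ 0 → IsUnit x)
    (hur : ∀ (ℓ : ℕ) [Fact ℓ.Prime], ℓ ≠ p →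
      ∃ x : ℍ[ℚ_[ℓ], (c₁ : ℚ_[ℓ]), (c₂ : ℚ_[ℓ])], x ≠ 0 ∧ ¬IsUnit x)
    (R : Subring ℍ[ℚ,c₁,c₂]) (hR : IsQuaternionOrder R)
    (hmax : ∀ S : Subring ℍ[ℚ,c₁,c₂], IsQuaternionOrder S → R ≤ S → S = R)
    (k₁ k₂ : ℍ[ℚ,c₁,c₂]) (hk₁ : k₁ ∈ R) (hk₂ : k₂ ∈ R)
    (n₁ n₂ : ℚ) (hn₁ : k₁ * star k₁ = algebraMap ℚ _ n₁)
    (hn₂ : k₂ * star k₂ = algebraMap ℚ _ n₂)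
    (hb₁ : (n₁ : ℝ) < Real.sqrt p / 2) (hb₂ : (n₂ : ℝ) < Real.sqrt p / 2) :
    k₁ * k₂ = k₂ * k₁ :=
  small_norm_elements_commute_general p (hp := hp) c₁ c₂ hinf hramp R hR k₁ k₂ hk₁ hk₂ n₁ n₂ hn₁ hn₂
    hb₁ hb₂
end

section
/- Let K⁺ be a cubic field with conjugate embeddings sending α to α₁, α₂, α₃ (the Galois conjugates of a primitive element α ∉ Q). If m₁, m₂, m₃ are positive integers with m₁α₁ + m₂α₂ + m₃α₃ ∈ Q, then m₁ = m₂ = m₃. -/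
/-!
Subtracting `m₂` times the trace `α₁ + α₂ + α₃ ∈ ℚ` turns the hypothesis into a relation
`a α₁ + b α₂ ∈ ℚ`. If `b ≠ 0` this reads `α₂ = β + λ α₁` with `β, λ ∈ ℚ`. The affine map
`u ↦ β + λ u` sends one conjugate of `α₁` to a conjugate, so the minimal polynomial divides its
composite with this map, which therefore sends every conjugate to a conjugate. It permutes this finite set, so some iterate fixes `α₁` and `α₂`, which forces `λⁿ = 1`, i.e.
`λ = ±1`. A nonzero translation has no periodic points, so `λ = -1`: then `α₁ + α₂ ∈ ℚ`, and the
third conjugate would be rational.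
-/

open Polynomial

theorem Set.Finite.exists_pos_iterate_eq_self {α : Type*} {f : α → α} {s : Set α}
    (hs : s.Finite) (hf : Set.MapsTo f s s) (hinj : Set.InjOn f s) :
    ∃ n, 0 < n ∧ ∀ x ∈ s, f^[n] x = x := by
  have := hs.fintype
  refine ⟨(Fintype.card s).factorial, Nat.factorial_pos _, fun x hx => ?_⟩
  have h := congrFun (Function.injective_iff_iterate_factorial_card_eq_id.1
    (hf.restrict_inj.2 hinj)) ⟨x, hx⟩
  simpa only [hf.coe_iterate_restrict, id] using congrArg Subtype.val h

theorem iterate_add_mul_apply {R : Type*} [CommSemiring R] (b l u : R) (n : ℕ) :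
    (fun w => b + l * w)^[n] u = l ^ n * u + b * ∑ i ∈ Finset.range n, l ^ i := by
  induction n with
  | zero => simp
  | succ n ih =>
    simp only [Function.iterate_succ_apply', ih, Finset.sum_range_succ', pow_succ',
      ← Finset.mul_sum]
    ring

section Conjugates

variable {K L : Type*} [Field K] [Field L] [Algebra K L]

theorem IsConjRoot.ne_algebraMap {x y : L} (h : IsConjRoot K x y) (hne : x ≠ y) (q : K) :
    x ≠ algebraMap K L q := by
  rintro rfl
  exact hne (isConjRoot_iff_eq_algebraMap.1 h).symm

theorem IsConjRoot.aeval_of_isConjRoot_aeval {x y : L} {f : K[X]} (hx : IsIntegral K x)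
    (hf : IsConjRoot K x (aeval x f)) (hy : IsConjRoot K x y) :
    IsConjRoot K x (aeval y f) := by
  refine isConjRoot_of_aeval_eq_zero hx ?_
  have hdvd : minpoly K y ∣ (minpoly K x).comp f :=
    hy ▸ minpoly.dvd K x (by rw [aeval_comp]; exact hf.aeval_eq_zero)
  rw [← aeval_comp]
  exact minpoly.dvd_iff.1 hdvd

theorem IsConjRoot.exists_iterate_add_mul_eq_self {x y : L} (hx : IsIntegral K x)
    (hxy : IsConjRoot K x y) {b l : K} (hl : l ≠ 0)
    (h : y = algebraMap K L b + algebraMap K L l * x) :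
    ∃ n, 0 < n ∧ ∀ u, IsConjRoot K x u →
      (fun w => algebraMap K L b + algebraMap K L l * w)^[n] u = u := by
  set φ : L → L := fun u => algebraMap K L b + algebraMap K L l * u
  have hφ_aeval : ∀ u, φ u = aeval u (C b + C l * X) := by simp [φ]
  have hmaps : Set.MapsTo φ {u | IsConjRoot K x u} {u | IsConjRoot K x u} := fun u hu => by
    change IsConjRoot K x (φ u)
    rw [hφ_aeval]
    exact IsConjRoot.aeval_of_isConjRoot_aeval hx
      (by rwa [← hφ_aeval, show φ x = y from h.symm]) hu
  have hinj : Set.InjOn φ {u | IsConjRoot K x u} := fun u _ v _ huv => by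
    simpa [φ, hl] using huv
  have hfin : {u | IsConjRoot K x u}.Finite :=
    ((minpoly K x).rootSet_finite L).subset fun u hu =>
      (isConjRoot_iff_mem_minpoly_rootSet hx).1 hu
  exact hfin.exists_pos_iterate_eq_self hmaps hinj

theorem IsConjRoot.eq_neg_one_of_eq_add_mul [LinearOrder K] [IsStrictOrderedRing K] {x y : L}
    (hx : IsIntegral K x) (hxy : IsConjRoot K x y) (hne : x ≠ y) {b l : K}
    (h : y = algebraMap K L b + algebraMap K L l * x) : l = -1 := by
  have hl : l ≠ 0 := by
    rintro rfl
    exact hxy.symm.ne_algebraMap hne.symm b (by simpa using h)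
  obtain ⟨n, hn, hper⟩ := hxy.exists_iterate_add_mul_eq_self hx hl h
  have hx_per := hper x IsConjRoot.refl
  have hy_per := hper y hxy
  rw [iterate_add_mul_apply] at hx_per hy_per
  have hpow : l ^ n = 1 := by
    have : (algebraMap K L l ^ n - 1) * (x - y) = 0 := by linear_combination hx_per - hy_per
    simpa [sub_eq_zero, hne, ← map_pow] using this
  rcases (pow_eq_one_iff_of_ne_zero hn.ne').1 hpow with rfl | ⟨rfl, -⟩
  · have : CharZero L := charZero_of_injective_algebraMap (algebraMap K L).injective
    have hb : b = 0 := by simpa [hn.ne'] using hx_per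
    simp only [hb, map_zero, map_one, zero_add, one_mul] at h
    exact absurd h.symm hne
  · rfl

theorem eq_zero_of_smul_add_smul_eq_algebraMap [LinearOrder K] [IsStrictOrderedRing K]
    {α x y z : L} (hα : IsIntegral K α) (hroots : (minpoly K α).aroots L = {x, y, z})
    {t : K} (ht : x + y + z = algebraMap K L t) {a b c : K}
    (h : a • x + b • y = algebraMap K L c) : a = 0 ∧ b = 0 := by
  have hconj : ∀ w ∈ ({x, y, z} : Multiset L), IsConjRoot K α w := fun w hw =>
    (isConjRoot_iff_mem_minpoly_aroots hα).2 (hroots ▸ hw)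
  have hnodup : ({x, y, z} : Multiset L).Nodup :=
    hroots ▸ nodup_roots (minpoly.irreducible hα).separable.map
  obtain ⟨⟨hne_xy, hne_xz⟩, -⟩ : (x ≠ y ∧ x ≠ z) ∧ y ≠ z := by
    simpa only [Multiset.insert_eq_cons, Multiset.nodup_cons, Multiset.mem_cons,
      Multiset.mem_singleton, not_or, Multiset.nodup_singleton, and_true] using hnodup
  have hαx : IsConjRoot K α x := hconj x (by simp)
  have hxy : IsConjRoot K x y := hαx.symm.trans (hconj y (by simp))
  have hxz : IsConjRoot K x z := hαx.symm.trans (hconj z (by simp))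
  rw [Algebra.smul_def, Algebra.smul_def] at h
  by_cases hb : b = 0
  · refine ⟨?_, hb⟩
    by_contra ha
    have haL : algebraMap K L a ≠ 0 := by simpa using ha
    refine hxy.ne_algebraMap hne_xy (c / a) ?_
    rw [map_div₀]
    field_simp
    simp only [hb, map_zero, zero_mul, add_zero] at h
    linear_combination h
  · exfalso
    have hbL : algebraMap K L b ≠ 0 := by simpa using hb
    have hl := hxy.eq_neg_one_of_eq_add_mul (hαx.isIntegral hα) hne_xy
      (b := c / b) (l := -a / b) (by
        rw [map_div₀, map_div₀, map_neg]
        field_simp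
        linear_combination h)
    obtain rfl : a = b := by field_simp at hl; linarith
    refine hxz.symm.ne_algebraMap hne_xz.symm (t - c / a) ?_
    rw [map_sub, map_div₀]
    field_simp
    linear_combination algebraMap K L a * ht - h

end Conjugates

theorem conj_comb_rational_of_cubic_general (α : ℂ) (hint : IsIntegral ℚ α)
    (r : Fin 3 → ℂ)
    (hroots : (minpoly ℚ α).aroots ℂ = {r 0, r 1, r 2}) (m : Fin 3 → ℕ)
    (hsum : ∃ q : ℚ, (m 0 : ℂ) * r 0 + (m 1 : ℂ) * r 1 + (m 2 : ℂ) * r 2 = (q : ℂ)) :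
    m 0 = m 1 ∧ m 1 = m 2 := by
  obtain ⟨q, hq⟩ := hsum
  obtain ⟨t, ht⟩ : ∃ t : ℚ, r 0 + r 1 + r 2 = algebraMap ℚ ℂ t := ⟨_, by
    simpa [hroots, add_assoc] using (IntermediateField.AdjoinSimple.trace_gen_eq_sum_roots
      (K := ℚ) (F := ℂ) α (IsAlgClosed.splits _)).symm⟩
  have hrel : ((m 0 : ℚ) - m 2) • r 0 + ((m 1 : ℚ) - m 2) • r 1 =
      algebraMap ℚ ℂ (q - m 2 * t) := by
    simp only [Rat.smul_def, eq_ratCast] at ht ⊢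
    push_cast
    linear_combination hq - (m 2 : ℂ) * ht
  obtain ⟨h0, h1⟩ := eq_zero_of_smul_add_smul_eq_algebraMap hint hroots ht hrel
  rw [sub_eq_zero, Nat.cast_inj] at h0 h1
  omega

/-- Let `K⁺ = ℚ(α)` be a cubic field with primitive element `α ∉ ℚ`, and let
`r 0, r 1, r 2 ∈ ℂ` be the three Galois conjugates of `α` (the roots of its degree-3 minimal
polynomial over `ℚ`). If `m 0, m 1, m 2` are positive integers with
`m 0 • r 0 + m 1 • r 1 + m 2 • r 2 ∈ ℚ`, then `m 0 = m 1 = m 2`. -/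
theorem conj_comb_rational_of_cubic (α : ℂ) (hint : IsIntegral ℚ α)
    (hdeg : (minpoly ℚ α).natDegree = 3) (r : Fin 3 → ℂ)
    (hroots : (minpoly ℚ α).aroots ℂ = {r 0, r 1, r 2}) (m : Fin 3 → ℕ)
    (hm : ∀ i, 0 < m i)
    (hsum : ∃ q : ℚ, (m 0 : ℂ) * r 0 + (m 1 : ℂ) * r 1 + (m 2 : ℂ) * r 2 = (q : ℂ)) :
    m 0 = m 1 ∧ m 1 = m 2 :=
  conj_comb_rational_of_cubic_general α hint r hroots m hsum
end

section
/- Let p be an odd prime and let ε = 1 if p ≡ 3 (mod 4), ε = 2 if p ≡ 5 (mod 8), and ε = ℓ if p ≡ 1 (mod 8), where ℓ is a prime with ℓ ≡ 3 (mod 4) and ℓ a non-square modulo p. Then the quaternion algebra (−ε, −p / Q) is a division algebra ramified exactly at p and at the infinite place. -/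
/-!
An element of `ℍ[K, -e, -P]` is invertible iff its reduced norm `x * star x`, i.e.
`a² + e b² + P c² + e P d²`, is nonzero, so ramification at a place is anisotropy of this norm
form. Over `ℚ` and `ℝ` it is positive definite. At `p`, `-ε` is a non-square mod `p`, so
`p ∣ a² + ε b²` forces `p ∣ a, b`; hence every zero of the form over `ℤ_[p]` is `p` times another
zero, and a zero over `ℚ_[p]` (after clearing denominators) is infinitely divisible, so trivial.
At `ℓ ≠ p` a nontrivial zero comes from Hensel's lemma: for odd `ℓ ∤ ε` from a solution of
`a² + ε b² + p ≡ 0 (mod ℓ)`, for `ℓ = ε` from `-p` being a square mod `ℓ` (quadratic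
reciprocity), and for `ℓ = 2` from a congruence mod `8`.
-/

open scoped Quaternion

/-- `a² + e b² + P c² + e P d²` is the reduced norm of `⟨a, b, c, d⟩ : ℍ[R, -e, -P]`. -/
def NormFormAnisotropic {R : Type*} [CommRing R] (e P : R) : Prop :=
  ∀ a b c d : R, a ^ 2 + e * b ^ 2 + P * c ^ 2 + e * P * d ^ 2 = 0 →
    a = 0 ∧ b = 0 ∧ c = 0 ∧ d = 0

namespace QuaternionAlgebra

theorem re_self_mul_star_neg_neg {R : Type*} [CommRing R] {e P : R} (x : ℍ[R, -e, -P]) :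
    (x * star x).re = x.re ^ 2 + e * x.imI ^ 2 + P * x.imJ ^ 2 + e * P * x.imK ^ 2 := by
  simp only [re_mul, re_star, imI_star, imJ_star, imK_star]
  ring

variable {K : Type*} [Field K]

theorem isUnit_iff_re_self_mul_star_ne_zero {c₁ c₂ c₃ : K} (x : ℍ[K, c₁, c₂, c₃]) :
    IsUnit x ↔ (x * star x).re ≠ 0 := by
  set r := (x * star x).re with hr
  have hstar : star x * x = r := by rw [star_comm_self', ← mul_star_eq_coe]
  refine ⟨fun hx hr0 => ?_, fun hr0 => ?_⟩
  · have : star x = 0 := hx.mul_right_eq_zero.mp (by rw [mul_star_eq_coe, ← hr, hr0, coe_zero])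
    exact not_isUnit_zero (star_eq_zero.mp this ▸ hx)
  · have hinv : r⁻¹ • (r : ℍ[K, c₁, c₂, c₃]) = 1 := by
      rw [smul_coe, inv_mul_cancel₀ hr0, coe_one]
    refine ⟨⟨x, r⁻¹ • star x, ?_, ?_⟩, rfl⟩
    · rw [mul_smul_comm, mul_star_eq_coe, ← hr, hinv]
    · rw [smul_mul_assoc, hstar, hinv]

theorem forall_ne_zero_isUnit_iff {e P : K} :
    (∀ x : ℍ[K, -e, -P], x ≠ 0 → IsUnit x) ↔ NormFormAnisotropic e P := by
  simp only [isUnit_iff_re_self_mul_star_ne_zero, re_self_mul_star_neg_neg]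
  refine ⟨fun h a b c d habcd => ?_, fun h x hx hx0 => hx ?_⟩
  · by_contra hne
    exact h ⟨a, b, c, d⟩ (by simpa [QuaternionAlgebra.ext_iff] using hne) habcd
  · obtain ⟨h1, h2, h3, h4⟩ := h _ _ _ _ hx0
    ext <;> assumption

theorem exists_ne_zero_not_isUnit_iff {e P : K} :
    (∃ x : ℍ[K, -e, -P], x ≠ 0 ∧ ¬IsUnit x) ↔ ¬NormFormAnisotropic e P := by
  simp only [← forall_ne_zero_isUnit_iff, not_forall, exists_prop]

end QuaternionAlgebra

namespace NormFormAnisotropic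

theorem of_pos {K : Type*} [Field K] [LinearOrder K] [IsStrictOrderedRing K] {e P : K}
    (he : 0 < e) (hP : 0 < P) : NormFormAnisotropic e P := by
  intro a b c d h
  have ha₀ := sq_nonneg a
  have hb₀ := mul_nonneg he.le (sq_nonneg b)
  have hc₀ := mul_nonneg hP.le (sq_nonneg c)
  have hd₀ := mul_nonneg (mul_pos he hP).le (sq_nonneg d)
  have ha : a ^ 2 = 0 := by linarith
  have hb : e * b ^ 2 = 0 := by linarith
  have hc : P * c ^ 2 = 0 := by linarith
  have hd : e * P * d ^ 2 = 0 := by linarith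
  exact ⟨by simpa using ha, by simpa [he.ne'] using hb, by simpa [hP.ne'] using hc,
    by simpa [he.ne', hP.ne'] using hd⟩

theorem map_of_isFractionRing {R K : Type*} [CommRing R] [IsDomain R] [Field K] [Algebra R K]
    [IsFractionRing R K] {e P : R} (h : NormFormAnisotropic e P) :
    NormFormAnisotropic (algebraMap R K e) (algebraMap R K P) := by
  intro a b c d habcd
  obtain ⟨⟨m, hm⟩, hint⟩ :=
    IsLocalization.exist_integer_multiples_of_finite (nonZeroDivisors R) ![a, b, c, d]
  obtain ⟨A, hA⟩ := hint 0
  obtain ⟨B, hB⟩ := hint 1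
  obtain ⟨C, hC⟩ := hint 2
  obtain ⟨D, hD⟩ := hint 3
  simp only [Matrix.cons_val, Algebra.smul_def] at hA hB hC hD
  have hm0 : algebraMap R K m ≠ 0 := IsFractionRing.to_map_ne_zero_of_mem_nonZeroDivisors hm
  have hABCD : A ^ 2 + e * B ^ 2 + P * C ^ 2 + e * P * D ^ 2 = 0 := by
    apply IsFractionRing.injective R K
    simp only [map_add, map_mul, map_pow, map_zero, hA, hB, hC, hD]
    linear_combination (algebraMap R K m) ^ 2 * habcd
  obtain ⟨rfl, rfl, rfl, rfl⟩ := h A B C D hABCD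
  simp only [map_zero, zero_eq_mul, hm0, false_or] at hA hB hC hD
  exact ⟨hA, hB, hC, hD⟩

variable {K : Type*} [Field K] {e P : K}

theorem not_of_isSquare_neg {b c d : K}
    (h : IsSquare (-(e * b ^ 2 + P * c ^ 2 + e * P * d ^ 2)))
    (hbcd : ¬(b = 0 ∧ c = 0 ∧ d = 0)) : ¬NormFormAnisotropic e P := by
  obtain ⟨a, ha⟩ := h
  exact fun hani => hbcd (hani a b c d (by linear_combination -ha)).2

theorem not_of_isSquare_neg_mul (he : e ≠ 0) (h : IsSquare (-(e * P))) :
    ¬NormFormAnisotropic e P := by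
  obtain ⟨w, hw⟩ := h
  refine fun hani => one_ne_zero (hani 0 (w / e) 1 0 ?_).2.2.1
  field_simp
  linear_combination -hw

end NormFormAnisotropic

theorem FiniteField.isSquare_mul_of_not_isSquare {F : Type*} [Field F] [Fintype F] {a b : F}
    (ha : ¬IsSquare a) (hb : ¬IsSquare b) : IsSquare (a * b) := by
  classical
  have ha0 : a ≠ 0 := by rintro rfl; exact ha IsSquare.zero
  have hb0 : b ≠ 0 := by rintro rfl; exact hb IsSquare.zero
  rw [← quadraticChar_one_iff_isSquare (mul_ne_zero ha0 hb0), map_mul,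
    quadraticChar_neg_one_iff_not_isSquare.mpr ha, quadraticChar_neg_one_iff_not_isSquare.mpr hb]
  norm_num

namespace PadicInt

variable {p : ℕ} [Fact p.Prime]

theorem toZMod_eq_zero_iff_dvd {x : ℤ_[p]} : toZMod x = 0 ↔ (p : ℤ_[p]) ∣ x := by
  rw [← RingHom.mem_ker, ker_toZMod, maximalIdeal_eq_span_p, Ideal.mem_span_singleton]

theorem norm_eq_one_iff_toZMod_ne_zero {x : ℤ_[p]} : ‖x‖ = 1 ↔ toZMod x ≠ 0 := by
  rw [← isUnit_iff, ← not_iff_not, not_not, not_isUnit_iff, norm_lt_one_iff_dvd,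
    toZMod_eq_zero_iff_dvd]

theorem eq_zero_of_forall_pow_dvd {x : ℤ_[p]} (h : ∀ n : ℕ, (p : ℤ_[p]) ^ n ∣ x) : x = 0 := by
  by_contra hx
  exact FiniteMultiplicity.not_iff_forall.mpr h (.of_prime_left prime_p hx)

theorem dvd_of_dvd_sq_add_mul_sq {E a b : ℤ_[p]} (hE : ¬IsSquare (-toZMod E))
    (h : (p : ℤ_[p]) ∣ a ^ 2 + E * b ^ 2) : (p : ℤ_[p]) ∣ a ∧ (p : ℤ_[p]) ∣ b := by
  simp only [← toZMod_eq_zero_iff_dvd, map_add, map_mul, map_pow] at h ⊢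
  by_cases hb : toZMod b = 0
  · rw [hb, zero_pow two_ne_zero, mul_zero, add_zero, pow_eq_zero_iff two_ne_zero] at h
    exact ⟨h, hb⟩
  · exact (hE ⟨toZMod a / toZMod b, by field_simp; linear_combination -h⟩).elim

theorem exists_eq_p_mul_of_normForm_eq_zero {E a b c d : ℤ_[p]} (hE : ¬IsSquare (-toZMod E))
    (h : a ^ 2 + E * b ^ 2 + p * c ^ 2 + E * p * d ^ 2 = 0) :
    ∃ a' b' c' d' : ℤ_[p], a' ^ 2 + E * b' ^ 2 + p * c' ^ 2 + E * p * d' ^ 2 = 0 ∧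
      a = p * a' ∧ b = p * b' ∧ c = p * c' ∧ d = p * d' := by
  have hp0 : (p : ℤ_[p]) ≠ 0 := prime_p.ne_zero
  obtain ⟨⟨a', rfl⟩, ⟨b', rfl⟩⟩ :=
    dvd_of_dvd_sq_add_mul_sq (a := a) (b := b) hE ⟨-(c ^ 2 + E * d ^ 2), by linear_combination h⟩
  have h' : c ^ 2 + E * d ^ 2 + p * (a' ^ 2 + E * b' ^ 2) = 0 :=
    mul_left_cancel₀ hp0 (by linear_combination h)
  obtain ⟨⟨c', rfl⟩, ⟨d', rfl⟩⟩ := dvd_of_dvd_sq_add_mul_sq (a := c) (b := d) hE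
    ⟨-(a' ^ 2 + E * b' ^ 2), by linear_combination h'⟩
  refine ⟨a', b', c', d', ?_, rfl, rfl, rfl, rfl⟩
  exact mul_left_cancel₀ (pow_ne_zero 2 hp0) (by linear_combination (p : ℤ_[p]) * h')

theorem normFormAnisotropic {E : ℤ_[p]} (hE : ¬IsSquare (-toZMod E)) :
    NormFormAnisotropic E (p : ℤ_[p]) := by
  intro a b c d h
  have hdvd : ∀ n : ℕ, (p : ℤ_[p]) ^ n ∣ a ∧ (p : ℤ_[p]) ^ n ∣ b ∧
      (p : ℤ_[p]) ^ n ∣ c ∧ (p : ℤ_[p]) ^ n ∣ d := by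
    intro n
    induction n generalizing a b c d with
    | zero => simp
    | succ n ih =>
      obtain ⟨a', b', c', d', h', rfl, rfl, rfl, rfl⟩ := exists_eq_p_mul_of_normForm_eq_zero hE h
      obtain ⟨ha, hb, hc, hd⟩ := ih _ _ _ _ h'
      simp only [pow_succ', mul_dvd_mul_left, ha, hb, hc, hd, and_self]
  exact ⟨eq_zero_of_forall_pow_dvd fun n => (hdvd n).1,
    eq_zero_of_forall_pow_dvd fun n => (hdvd n).2.1,
    eq_zero_of_forall_pow_dvd fun n => (hdvd n).2.2.1,
    eq_zero_of_forall_pow_dvd fun n => (hdvd n).2.2.2⟩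

theorem isSquare_of_norm_sub_sq_lt {x a : ℤ_[p]} (h : ‖x - a ^ 2‖ < ‖2 * a‖ ^ 2) :
    IsSquare x := by
  open Polynomial in
  obtain ⟨z, hz, -⟩ := hensels_lemma (F := X ^ 2 - C x) (a := a) (by
    rw [derivative_sub, derivative_X_sq, derivative_C, sub_zero]
    simpa [norm_sub_rev, map_ofNat] using h)
  exact ⟨z, by simpa [sub_eq_zero, sq, eq_comm] using hz⟩

theorem isSquare_of_isSquare_toZMod (hp : p ≠ 2) {x : ℤ_[p]} (hx : toZMod x ≠ 0)
    (h : IsSquare (toZMod x)) : IsSquare x := by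
  obtain ⟨t, ht⟩ := h
  obtain ⟨a, rfl⟩ := ZMod.ringHom_surjective (toZMod (p := p)) t
  refine isSquare_of_norm_sub_sq_lt (a := a) ?_
  have h2 : (2 : ZMod p) ≠ 0 := Ring.two_ne_zero (by rwa [ZMod.ringChar_zmod_n])
  have ha : toZMod a ≠ 0 := fun ha => hx (by rw [ht, ha, mul_zero])
  have hunit : ‖2 * a‖ = 1 := by
    rw [norm_eq_one_iff_toZMod_ne_zero, map_mul, map_ofNat]
    exact mul_ne_zero h2 ha
  rw [hunit, one_pow, norm_lt_one_iff_dvd, ← toZMod_eq_zero_iff_dvd, map_sub, map_pow, ht, sq,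
    sub_self]

theorem isSquare_of_eight_dvd_sub_one {x : ℤ_[2]} (h : (8 : ℤ_[2]) ∣ x - 1) : IsSquare x := by
  refine isSquare_of_norm_sub_sq_lt (a := 1) ?_
  obtain ⟨y, hy⟩ := h
  have h2 : ‖(2 : ℤ_[2])‖ = 2⁻¹ := by exact_mod_cast norm_p (p := 2)
  calc ‖x - 1 ^ 2‖ = 8⁻¹ * ‖y‖ := by
        rw [one_pow, hy, norm_mul, show (8 : ℤ_[2]) = 2 ^ 3 by norm_num, norm_pow, h2]
        norm_num
    _ ≤ 8⁻¹ := mul_le_of_le_one_right (by norm_num) (norm_le_one y)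
    _ < ‖2 * (1 : ℤ_[2])‖ ^ 2 := by rw [mul_one, h2]; norm_num

end PadicInt

namespace Padic

open PadicInt

variable {p : ℕ} [Fact p.Prime]

theorem isSquare_coe {x : ℤ_[p]} (h : IsSquare x) : IsSquare (x : ℚ_[p]) :=
  h.map PadicInt.Coe.ringHom

theorem not_normFormAnisotropic_of_isSquare_neg (hp : p ≠ 2) (E : ℤ_[p]) {P : ℤ_[p]}
    (hP : toZMod P ≠ 0) (h : IsSquare (-toZMod P)) :
    ¬NormFormAnisotropic (E : ℚ_[p]) (P : ℚ_[p]) := by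
  refine NormFormAnisotropic.not_of_isSquare_neg (b := 0) (c := 1) (d := 0) ?_ (by simp)
  simpa using isSquare_coe (isSquare_of_isSquare_toZMod hp (x := -P) (by simpa using hP)
    (by simpa using h))

theorem not_normFormAnisotropic_of_toZMod_ne_zero (hp : p ≠ 2) {E P : ℤ_[p]}
    (hE : toZMod E ≠ 0) (hP : toZMod P ≠ 0) : ¬NormFormAnisotropic (E : ℚ_[p]) (P : ℚ_[p]) := by
  open Polynomial in
  obtain ⟨a, b, hab⟩ := FiniteField.exists_root_sum_quadratic
    (degree_X_pow_add_C two_pos (toZMod P)) (degree_C_mul_X_pow 2 hE)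
    (by rw [ZMod.card]; exact (Fact.out : p.Prime).eq_two_or_odd.resolve_left hp)
  simp only [Polynomial.eval_add, Polynomial.eval_mul, Polynomial.eval_pow, Polynomial.eval_C,
    Polynomial.eval_X] at hab
  obtain ⟨B, rfl⟩ := ZMod.ringHom_surjective (toZMod (p := p)) b
  by_cases ha : a = 0
  · subst ha
    have hsq : IsSquare (toZMod (-(E * P))) :=
      ⟨toZMod E * toZMod B, by simp only [map_neg, map_mul]; linear_combination -toZMod E * hab⟩
    refine NormFormAnisotropic.not_of_isSquare_neg_mul
      (by simpa using ne_of_apply_ne toZMod (by simpa using hE)) ?_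
    simpa using isSquare_coe (isSquare_of_isSquare_toZMod hp (by simpa using ⟨hE, hP⟩) hsq)
  · have hx : toZMod (-(E * B ^ 2 + P)) = a ^ 2 := by
      simp only [map_neg, map_add, map_mul, map_pow]
      linear_combination -hab
    refine NormFormAnisotropic.not_of_isSquare_neg (b := (B : ℚ_[p])) (c := 1) (d := 0) ?_
      (by simp)
    rw [show -((E : ℚ_[p]) * B ^ 2 + P * 1 ^ 2 + E * P * 0 ^ 2) =
      ((-(E * B ^ 2 + P) : ℤ_[p]) : ℚ_[p]) by push_cast; ring]
    exact isSquare_coe (isSquare_of_isSquare_toZMod hp (by rw [hx]; exact pow_ne_zero 2 ha)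
      (hx ▸ .sq a))

theorem not_normFormAnisotropic_two_of_eight_dvd {E P c d : ℤ_[2]}
    (h : (8 : ℤ_[2]) ∣ E + P * c ^ 2 + E * P * d ^ 2 + 1) :
    ¬NormFormAnisotropic (E : ℚ_[2]) (P : ℚ_[2]) := by
  refine NormFormAnisotropic.not_of_isSquare_neg (b := 1) (c := (c : ℚ_[2])) (d := (d : ℚ_[2]))
    ?_ (by simp)
  have hsq : IsSquare (-(E + P * c ^ 2 + E * P * d ^ 2)) :=
    isSquare_of_eight_dvd_sub_one (by rw [← neg_add', dvd_neg]; exact h)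
  rw [show -((E : ℚ_[2]) * 1 ^ 2 + P * c ^ 2 + E * P * d ^ 2) =
    ((-(E + P * c ^ 2 + E * P * d ^ 2) : ℤ_[2]) : ℚ_[2]) by push_cast; ring]
  exact isSquare_coe hsq

end Padic

def IsAdmissibleEpsilon (p ε : ℕ) : Prop :=
  p % 4 = 3 ∧ ε = 1 ∨ p % 8 = 5 ∧ ε = 2 ∨
    p % 8 = 1 ∧ ε.Prime ∧ ε % 4 = 3 ∧ ¬IsSquare (ε : ZMod p)

namespace IsAdmissibleEpsilon

variable {p ε : ℕ}

theorem of_mod (hp : p % 2 = 1) (hε₁ : p % 4 = 3 → ε = 1) (hε₂ : p % 8 = 5 → ε = 2)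
    (hε₃ : p % 8 = 1 → ε.Prime ∧ ε % 4 = 3 ∧ ¬IsSquare (ε : ZMod p)) :
    IsAdmissibleEpsilon p ε := by
  rcases (by omega : p % 4 = 3 ∨ p % 8 = 5 ∨ p % 8 = 1) with h | h | h
  · exact .inl ⟨h, hε₁ h⟩
  · exact .inr (.inl ⟨h, hε₂ h⟩)
  · exact .inr (.inr ⟨h, hε₃ h⟩)

theorem pos (hε : IsAdmissibleEpsilon p ε) : 0 < ε := by
  rcases hε with ⟨-, rfl⟩ | ⟨-, rfl⟩ | ⟨-, hε, -⟩
  exacts [one_pos, two_pos, hε.pos]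

theorem not_isSquare_neg [Fact p.Prime] (hε : IsAdmissibleEpsilon p ε) :
    ¬IsSquare (-(ε : ZMod p)) := by
  rcases hε with ⟨hp, rfl⟩ | ⟨hp, rfl⟩ | ⟨hp, -, -, hns⟩
  · simpa [ZMod.exists_sq_eq_neg_one_iff] using hp
  · rw [Nat.cast_ofNat, ZMod.exists_sq_eq_neg_two_iff (by omega)]
    omega
  · rintro ⟨t, ht⟩
    obtain ⟨s, hs⟩ := ZMod.exists_sq_eq_neg_one_iff.mpr (by omega : p % 4 ≠ 3)
    exact hns ⟨s * t, by linear_combination t * t * hs - ht⟩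

/-- Then `-(ε + p c² + ε p d²) ≡ 1 (mod 8)` is a square in `ℤ_[2]`. -/
theorem exists_eight_dvd (hε : IsAdmissibleEpsilon p ε) :
    ∃ c d : ℕ, 8 ∣ ε + p * c ^ 2 + ε * p * d ^ 2 + 1 := by
  rcases hε with ⟨hp, rfl⟩ | ⟨hp, rfl⟩ | ⟨hp, -, hε, -⟩
  · exact ⟨1, 1, by omega⟩
  · exact ⟨1, 0, by omega⟩
  · rcases (by omega : ε % 8 = 3 ∨ ε % 8 = 7) with h | h
    · exact ⟨2, 0, by omega⟩
    · exact ⟨0, 0, by omega⟩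

theorem isSquare_neg_of_dvd [Fact p.Prime] (hε : IsAdmissibleEpsilon p ε) {ℓ : ℕ}
    [Fact ℓ.Prime] (hℓ2 : ℓ ≠ 2) (hℓε : ℓ ∣ ε) : IsSquare (-(p : ZMod ℓ)) := by
  have hℓ : ℓ.Prime := Fact.out
  rcases hε with ⟨-, rfl⟩ | ⟨-, rfl⟩ | ⟨hp8, hεp, hε4, hns⟩
  · exact absurd (Nat.dvd_one.mp hℓε) hℓ.ne_one
  · exact absurd ((Nat.prime_dvd_prime_iff_eq hℓ Nat.prime_two).mp hℓε) hℓ2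
  obtain rfl := (Nat.prime_dvd_prime_iff_eq hℓ hεp).mp hℓε
  have hp : ¬IsSquare (p : ZMod ℓ) :=
    (ZMod.exists_sq_eq_prime_iff_of_mod_four_eq_one (by omega) hℓ2).not.mp hns
  have hm : ¬IsSquare (-1 : ZMod ℓ) := by rw [ZMod.exists_sq_eq_neg_one_iff]; omega
  simpa using FiniteField.isSquare_mul_of_not_isSquare hm hp

theorem normFormAnisotropic_padic [Fact p.Prime] (hε : IsAdmissibleEpsilon p ε) :
    NormFormAnisotropic (ε : ℚ_[p]) (p : ℚ_[p]) := by
  simpa using (PadicInt.normFormAnisotropic (E := ε) (by simpa using hε.not_isSquare_neg))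
    |>.map_of_isFractionRing (K := ℚ_[p])

theorem not_normFormAnisotropic_padic [Fact p.Prime] (hε : IsAdmissibleEpsilon p ε) {ℓ : ℕ}
    [Fact ℓ.Prime] (hℓp : ℓ ≠ p) : ¬NormFormAnisotropic (ε : ℚ_[ℓ]) (p : ℚ_[ℓ]) := by
  have hp0 : PadicInt.toZMod (p : ℤ_[ℓ]) ≠ 0 := by simpa using ZMod.prime_ne_zero ℓ p hℓp
  rcases eq_or_ne ℓ 2 with rfl | hℓ2
  · obtain ⟨c, d, h⟩ := hε.exists_eight_dvd
    exact_mod_cast Padic.not_normFormAnisotropic_two_of_eight_dvd (E := ε) (P := p) (c := c)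
      (d := d) (by exact_mod_cast Nat.cast_dvd_cast (α := ℤ_[2]) h)
  by_cases hℓε : ℓ ∣ ε
  · exact_mod_cast Padic.not_normFormAnisotropic_of_isSquare_neg hℓ2 ε hp0
      (by simpa using hε.isSquare_neg_of_dvd hℓ2 hℓε)
  · exact_mod_cast Padic.not_normFormAnisotropic_of_toZMod_ne_zero hℓ2 (E := ε)
      (by simpa [ZMod.natCast_eq_zero_iff] using hℓε) hp0

end IsAdmissibleEpsilon

/-- Let `p` be an odd prime and let `ε = 1` if `p ≡ 3 (mod 4)`, `ε = 2` if `p ≡ 5 (mod 8)`,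
and `ε = ℓ` a prime with `ℓ ≡ 3 (mod 4)` which is a non-square modulo `p` if
`p ≡ 1 (mod 8)`. Then the quaternion algebra `(−ε, −p / ℚ)` is a division algebra ramified
exactly at `p` and at the infinite place: `(−ε,−p/ℚ) ⊗ ℚ_p` and `(−ε,−p/ℚ) ⊗ ℝ` are
division algebras, while `(−ε,−p/ℚ) ⊗ ℚ_ℓ` is not, for every prime `ℓ ≠ p`. -/
theorem quaternion_algebra_ramified_exactly_at_p_and_infty (p : ℕ) [hp : Fact p.Prime]
    (hodd : p ≠ 2) (ε : ℕ)
    (hε₁ : p % 4 = 3 → ε = 1)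
    (hε₂ : p % 8 = 5 → ε = 2)
    (hε₃ : p % 8 = 1 → ε.Prime ∧ ε % 4 = 3 ∧ ¬IsSquare (ε : ZMod p)) :
    (∀ x : ℍ[ℚ, -(ε : ℚ), -(p : ℚ)], x ≠ 0 → IsUnit x) ∧
    (∀ x : ℍ[ℝ, -(ε : ℝ), -(p : ℝ)], x ≠ 0 → IsUnit x) ∧
    (∀ x : ℍ[ℚ_[p], -(ε : ℚ_[p]), -(p : ℚ_[p])], x ≠ 0 → IsUnit x) ∧
    (∀ (ℓ : ℕ) [Fact ℓ.Prime], ℓ ≠ p →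
      ∃ x : ℍ[ℚ_[ℓ], -(ε : ℚ_[ℓ]), -(p : ℚ_[ℓ])], x ≠ 0 ∧ ¬IsUnit x) := by
  have hε := IsAdmissibleEpsilon.of_mod (hp.out.eq_two_or_odd.resolve_left hodd) hε₁ hε₂ hε₃
  simp only [QuaternionAlgebra.forall_ne_zero_isUnit_iff,
    QuaternionAlgebra.exists_ne_zero_not_isUnit_iff]
  exact ⟨.of_pos (mod_cast hε.pos) (mod_cast hp.out.pos), .of_pos (mod_cast hε.pos)
    (mod_cast hp.out.pos), hε.normFormAnisotropic_padic,
    fun ℓ _ hℓp => hε.not_normFormAnisotropic_padic hℓp⟩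
end
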